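/- arXiv:1112.5241 — 5 statements merged into one kernel-verified Lean document; each statement's English description precedes it below -/
import Mathlib

section
/- Let (X, κ) be a connectivity space and let ∼ be an equivalence relation on X all of whose equivalence classes belong to κ. Let s : X → X/∼ be the canonical surjection. Then the family {s''K : K ∈ κ} of images of connected sets is itself a connectivity structure on X/∼; consequently, the connectivity structure on X/∼ generated by the images of the connected sets of X is exactly {s''K : K ∈ κ}. -/
/-- A connectivity structure on `X`. -/
def IsConnectivity {X : Type*} (κ : Set (Set X)) : Prop :=
  ∅ ∈ κ ∧ ∀ ℐ ⊆ κ, (⋂₀ ℐ).Nonempty → ⋃₀ ℐ ∈ κ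

/-- The connectivity structure generated by a family of subsets: the intersection of
all connectivity structures containing it. -/
def generated {X : Type*} (𝒜 : Set (Set X)) : Set (Set X) :=
  ⋂₀ {κ | IsConnectivity κ ∧ 𝒜 ⊆ κ}

/-!
If every fibre of `f` is connected, then for connected `K` the saturation `f ⁻¹' (f '' K)` is
the union of the connected sets `K ∪ f ⁻¹' {f k}`, `k ∈ K`, which share any chosen point of
`K`; hence it is connected. Given a family of images `f '' K` through a common point `f x`,
their saturations all contain `x`, so their union is connected, and its image is the union of
the family.
-/

theorem generated_eq_self {X : Type*} {κ : Set (Set X)} (hκ : IsConnectivity κ) :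
    generated κ = κ :=
  have hmem : κ ∈ {κ' | IsConnectivity κ' ∧ κ ⊆ κ'} := ⟨hκ, subset_rfl⟩
  (Set.sInter_subset_of_mem hmem).antisymm fun _ hA _ hκ' => hκ'.2 hA

namespace IsConnectivity

variable {X Y : Type*} {κ : Set (Set X)}

theorem union_mem (hκ : IsConnectivity κ) {A B : Set X} (hA : A ∈ κ) (hB : B ∈ κ)
    (hAB : (A ∩ B).Nonempty) : A ∪ B ∈ κ := by
  rw [← Set.sUnion_pair]
  exact hκ.2 _ (Set.pair_subset hA hB) (by rwa [Set.sInter_pair])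

theorem preimage_image_mem (hκ : IsConnectivity κ) {f : X → Y}
    (hfib : ∀ x, f ⁻¹' {f x} ∈ κ) {K : Set X} (hK : K ∈ κ) : f ⁻¹' (f '' K) ∈ κ := by
  rcases K.eq_empty_or_nonempty with rfl | ⟨k₀, hk₀⟩
  · simpa using hκ.1
  have hsat : f ⁻¹' (f '' K) = ⋃₀ ((fun k => K ∪ f ⁻¹' {f k}) '' K) := by
    ext y
    simp only [Set.mem_preimage, Set.mem_image, Set.sUnion_image, Set.mem_iUnion,
      Set.mem_union, Set.mem_singleton_iff, exists_prop]
    exact ⟨fun ⟨k, hk, hky⟩ => ⟨k, hk, Or.inr hky.symm⟩,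
      fun ⟨k, hk, hy⟩ => hy.elim (fun hyK => ⟨y, hyK, rfl⟩) fun hyk => ⟨k, hk, hyk.symm⟩⟩
  rw [hsat]
  refine hκ.2 _ ?_ ⟨k₀, ?_⟩
  · rintro _ ⟨k, hk, rfl⟩
    exact hκ.union_mem hK (hfib k) ⟨k, hk, rfl⟩
  · rintro _ ⟨k, -, rfl⟩
    exact Or.inl hk₀

theorem image_of_fiber_mem (hκ : IsConnectivity κ) {f : X → Y} (hf : f.Surjective)
    (hfib : ∀ x, f ⁻¹' {f x} ∈ κ) : IsConnectivity {A | ∃ K ∈ κ, A = f '' K} := by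
  refine ⟨⟨∅, hκ.1, (Set.image_empty f).symm⟩, fun ℐ hℐ ⟨q, hq⟩ => ?_⟩
  obtain ⟨x, rfl⟩ := hf q
  refine ⟨f ⁻¹' ⋃₀ ℐ, ?_, (Set.image_preimage_eq _ hf).symm⟩
  rw [Set.preimage_sUnion, ← Set.sUnion_image]
  refine hκ.2 _ ?_ ⟨x, ?_⟩
  · rintro _ ⟨A, hA, rfl⟩
    obtain ⟨K, hK, rfl⟩ := hℐ hA
    exact hκ.preimage_image_mem hfib hK
  · rintro _ ⟨A, hA, rfl⟩
    exact hq A hA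

end IsConnectivity

/-- If all equivalence classes are connected, the images of the connected sets already
form a connectivity structure on the quotient, so the quotient connectivity structure
is exactly the set of these images. -/
theorem quotient_structure_of_connected_classes
    {X : Type*} (κ : Set (Set X)) (hκ : IsConnectivity κ)
    (r : Setoid X) (hcl : ∀ x : X, {y : X | r.r y x} ∈ κ) :
    IsConnectivity {A : Set (Quotient r) | ∃ K ∈ κ, A = Quotient.mk r '' K} ∧
    generated {A : Set (Quotient r) | ∃ K ∈ κ, A = Quotient.mk r '' K} =
      {A : Set (Quotient r) | ∃ K ∈ κ, A = Quotient.mk r '' K} := by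
  have hfib : ∀ x, Quotient.mk r ⁻¹' {Quotient.mk r x} ∈ κ := fun x => by
    convert hcl x using 1
    ext y
    exact Quotient.eq
  have hquot := hκ.image_of_fiber_mem Quotient.mk_surjective hfib
  exact ⟨hquot, generated_eq_self hquot⟩
end

section
/- Let (X, κ) be a connectivity space and ∼ an equivalence relation on X all of whose equivalence classes belong to κ. For A ⊆ X, let Â = ⋃_{x∈A} [x] be the union of the equivalence classes of the elements of A. If Â ∉ κ, then s''A does not belong to the quotient connectivity structure on X/∼, i.e., s''A is not an element of the connectivity structure generated by {s''K : K ∈ κ}, where s : X → X/∼ is the canonical surjection. -/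
/-- If all equivalence classes are connected and the saturation `Â` of `A` is not
connected, then the image of `A` is not connected in the quotient connectivity
structure. -/
theorem image_not_connected_of_saturation_not_connected
    {X : Type*} (κ : Set (Set X)) (hκ : IsConnectivity κ)
    (r : Setoid X) (hcl : ∀ x : X, {y : X | r.r y x} ∈ κ)
    (A : Set X) (hA : (⋃ x ∈ A, {y : X | r.r y x}) ∉ κ) :
    Quotient.mk r '' A ∉
      generated {B : Set (Quotient r) | ∃ K ∈ κ, B = Quotient.mk r '' K} := by
  set τ : Set (Set (Quotient r)) := {B | Quotient.mk r ⁻¹' B ∈ κ} with hτ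
  -- preimage of image is the saturation
  have hpre : ∀ S : Set X,
      Quotient.mk r ⁻¹' (Quotient.mk r '' S) = ⋃ x ∈ S, {y : X | r.r y x} := by
    intro S
    ext y
    simp only [Set.mem_preimage, Set.mem_image, Set.mem_iUnion, Set.mem_setOf_eq]
    constructor
    · rintro ⟨x, hx, hxy⟩
      exact ⟨x, hx, r.symm (Quotient.exact hxy)⟩
    · rintro ⟨x, hx, hyx⟩
      exact ⟨x, hx, Quotient.sound (r.symm hyx)⟩
  -- τ is a connectivity structure
  have hτconn : IsConnectivity τ := by
    constructor
    · show Quotient.mk r ⁻¹' ∅ ∈ κ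
      simpa using hκ.1
    · intro ℐ hℐ ⟨b, hb⟩
      show Quotient.mk r ⁻¹' ⋃₀ ℐ ∈ κ
      obtain ⟨x, hx⟩ := Quotient.exists_rep b
      have := hκ.2 ((fun B => Quotient.mk r ⁻¹' B) '' ℐ)
        (by rintro _ ⟨B, hB, rfl⟩; exact hℐ hB)
        ⟨x, by
          rw [Set.mem_sInter]
          rintro _ ⟨B, hB, rfl⟩
          simp only [Set.mem_preimage, hx]
          exact hb B hB⟩
      rwa [Set.sUnion_image, ← Set.preimage_sUnion] at this
  -- τ contains the generators
  have hgen : {B : Set (Quotient r) | ∃ K ∈ κ, B = Quotient.mk r '' K} ⊆ τ := by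
    rintro _ ⟨K, hK, rfl⟩
    show Quotient.mk r ⁻¹' (Quotient.mk r '' K) ∈ κ
    rcases K.eq_empty_or_nonempty with rfl | ⟨x0, hx0⟩
    · simpa using hκ.1
    · have hUx : ∀ x ∈ K, K ∪ {y : X | r.r y x} ∈ κ := by
        intro x hx
        have := hκ.2 {K, {y : X | r.r y x}}
          (by rintro B hB
              rcases hB with rfl | hB
              · exact hK
              · rw [Set.mem_singleton_iff] at hB; subst hB; exact hcl x)
          ⟨x, by
            rw [Set.mem_sInter]
            rintro B hB
            rcases hB with rfl | hB
            · exact hx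
            · rw [Set.mem_singleton_iff] at hB; subst hB; exact r.refl x⟩
        simpa using this
      have := hκ.2 ((fun x => K ∪ {y : X | r.r y x}) '' K)
        (by rintro _ ⟨x, hx, rfl⟩; exact hUx x hx)
        ⟨x0, by
          rw [Set.mem_sInter]
          rintro _ ⟨x, hx, rfl⟩
          exact Or.inl hx0⟩
      rw [Set.sUnion_image] at this
      have heq : (⋃ x ∈ K, (K ∪ {y : X | r.r y x}))
          = Quotient.mk r ⁻¹' (Quotient.mk r '' K) := by
        rw [hpre]
        ext y
        simp only [Set.mem_iUnion, Set.mem_union, Set.mem_setOf_eq]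
        constructor
        · rintro ⟨x, hx, hy | hy⟩
          · exact ⟨y, hy, r.refl y⟩
          · exact ⟨x, hx, hy⟩
        · rintro ⟨x, hx, hy⟩
          exact ⟨x, hx, Or.inr hy⟩
      rwa [heq] at this
  -- conclude
  intro hmem
  have : Quotient.mk r '' A ∈ τ := hmem τ ⟨hτconn, hgen⟩
  rw [hτ, Set.mem_setOf_eq, hpre] at this
  exact hA this
end

section
/- Let ρ be a clear and distinct connective representation of a connectivity space (X, κ_X) in a connectivity space (Y, κ_Y), and let κ₀ = {∅} ∪ {K ⊆ Y : ∃ a ∈ X, K ⊆ ρ(a)}. Then: (i) κ₀ is a connectivity structure on Y (equal to the connectivity structure generated by all subsets of the sets ρ(a)); (ii) the maximal nonempty κ₀-connected subsets of Y are exactly the sets ρ(a) for a ∈ X; (iii) the map a ↦ ρ(a) is injective, and for every A ⊆ X one has A ∈ κ_X if and only if ⋃_{a∈A} ρ(a) ∈ κ_Y; hence a ↦ ρ(a) is an isomorphism of connectivity spaces from (X, κ_X) onto the induced leaf space ({ρ(a) : a ∈ X}, {𝒜 : ⋃𝒜 ∈ κ_Y}). -/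
/-- A leaf: a maximal nonempty connected subset. -/
def IsLeaf {X : Type*} (κ₀ : Set (Set X)) (F : Set X) : Prop :=
  F ∈ κ₀ ∧ F.Nonempty ∧ ∀ K ∈ κ₀, F ⊆ K → K = F

/-- For a clear and distinct representation `ρ` of `(X, κX)` in `(Y, κY)`:
the subsets of the sets `ρ a` (together with `∅`) form a connectivity structure
(the one they generate), whose leaves are exactly the sets `ρ a`; moreover `ρ` is
injective and `A ∈ κX ↔ ⋃_{a ∈ A} ρ a ∈ κY`, so `ρ` is an isomorphism of `(X, κX)`
onto the induced leaf space. -/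
theorem clear_distinct_representation_iso_onto_induced_leaf_space
    {X Y : Type*} (κX : Set (Set X)) (κY : Set (Set Y))
    (hX : IsConnectivity κX) (hY : IsConnectivity κY)
    (ρ : X → Set Y)
    (hne : ∀ x : X, (ρ x).Nonempty)
    (hrep : ∀ K ∈ κX, (⋃ x ∈ K, ρ x) ∈ κY)
    (hclear : ∀ A : Set X, A ∉ κX → (⋃ x ∈ A, ρ x) ∉ κY)
    (hdist : ∀ x y : X, x ≠ y → ρ x ∩ ρ y = ∅) :
    IsConnectivity ({∅} ∪ {K : Set Y | ∃ a : X, K ⊆ ρ a}) ∧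
    ({∅} ∪ {K : Set Y | ∃ a : X, K ⊆ ρ a}) =
      generated {K : Set Y | ∃ a : X, K ⊆ ρ a} ∧
    {F : Set Y | IsLeaf ({∅} ∪ {K : Set Y | ∃ a : X, K ⊆ ρ a}) F} = Set.range ρ ∧
    Function.Injective ρ ∧
    (∀ A : Set X, A ∈ κX ↔ (⋃ a ∈ A, ρ a) ∈ κY) := by

  classical
  set κ₀ : Set (Set Y) := {∅} ∪ {K : Set Y | ∃ a : X, K ⊆ ρ a} with hκ₀
  have hsame : ∀ a b : X, (ρ a ∩ ρ b).Nonempty → a = b := by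
    intro a b h
    by_contra hab
    rw [hdist a b hab] at h
    exact Set.not_nonempty_empty h
  have hconn : IsConnectivity κ₀ := by
    constructor
    · exact Or.inl rfl
    · intro ℐ hℐ ⟨y, hy⟩
      rcases Set.eq_empty_or_nonempty ℐ with h | ⟨I, hI⟩
      · simp [h, hκ₀]
      have hIne : ∀ J ∈ ℐ, y ∈ J := fun J hJ => hy J hJ
      have hIa : ∃ a, I ⊆ ρ a := by
        rcases hℐ hI with h | h
        · exact absurd (hIne I hI) (by simp [Set.mem_singleton_iff.mp h])
        · exact h
      rcases hIa with ⟨a, ha⟩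
      right
      refine ⟨a, ?_⟩
      intro z hz
      rcases Set.mem_sUnion.mp hz with ⟨J, hJ, hzJ⟩
      rcases hℐ hJ with h | ⟨b, hb⟩
      · exact absurd (hIne J hJ) (by simp [Set.mem_singleton_iff.mp h])
      · have : a = b := hsame a b ⟨y, ha (hIne I hI), hb (hIne J hJ)⟩
        exact this ▸ hb hzJ
  refine ⟨hconn, ?_, ?_, ?_, ?_⟩
  · -- equals generated
    apply Set.Subset.antisymm
    · intro K hK
      intro κ hκ
      rcases hK with h | h
      · exact Set.mem_singleton_iff.mp h ▸ hκ.1.1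
      · exact hκ.2 h
    · intro K hK
      exact hK κ₀ ⟨hconn, fun K hK => Or.inr hK⟩
  · -- leaves
    ext F
    constructor
    · rintro ⟨hF, hFne, hmax⟩
      rcases hF with h | ⟨a, ha⟩
      · exact absurd hFne (by simp [Set.mem_singleton_iff.mp h])
      · exact ⟨a, hmax (ρ a) (Or.inr ⟨a, le_refl _⟩) ha⟩
    · rintro ⟨a, rfl⟩
      refine ⟨Or.inr ⟨a, le_refl _⟩, hne a, ?_⟩
      rintro K (h | ⟨b, hb⟩) hsub
      · exact absurd (hsub (hne a).choose_spec)
          (by simp [Set.mem_singleton_iff.mp h])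
      · have hab : a = b := hsame a b ⟨(hne a).choose,
          (hne a).choose_spec, hb (hsub (hne a).choose_spec)⟩
        exact Set.Subset.antisymm (hab ▸ hb) hsub
  · -- injective
    intro a b h
    refine hsame a b ?_
    rw [h, Set.inter_self]
    exact hne b
  · intro A
    constructor
    · exact hrep A
    · intro h
      by_contra hA
      exact hclear A hA h
end

section
/- Let (X, κ) be a finite connectivity space and let K ∈ κ be nonempty. Then K is irreducible, i.e., K does not belong to the connectivity structure generated by κ ∖ {K}, if and only if there do not exist two connected proper subsets A ⊊ K and B ⊊ K (A, B ∈ κ) with K = A ∪ B and A ∩ B ≠ ∅. -/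
theorem key_no_union {X : Type*} [Finite X] {κ : Set (Set X)} (hκ : IsConnectivity κ)
    {K : Set X}
    (hno : ¬ ∃ A B : Set X, A ∈ κ ∧ B ∈ κ ∧ A ⊂ K ∧ B ⊂ K ∧
        K = A ∪ B ∧ (A ∩ B).Nonempty)
    (hne : K.Nonempty) :
    ∀ n (ℐ : Set (Set X)), ℐ.ncard ≤ n → ℐ ⊆ κ → (∀ A ∈ ℐ, A ⊂ K) →
      (⋂₀ ℐ).Nonempty → ⋃₀ ℐ ≠ K := by
  intro n
  induction n with
  | zero =>
    intro ℐ hcard _ _ _ hU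
    have hfin : ℐ.Finite := Set.toFinite ℐ
    have : ℐ = ∅ := by
      rw [← Set.ncard_eq_zero hfin]; omega
    subst this
    simp at hU
    exact hne.ne_empty hU.symm
  | succ n ih =>
    intro ℐ hcard hsub hprop hint hU
    obtain ⟨x, hx⟩ := hint
    rcases Set.eq_empty_or_nonempty ℐ with h | ⟨A, hA⟩
    · subst h; simp at hU; exact hne.ne_empty hU.symm
    set ℐ' := ℐ \ {A} with hℐ'
    rcases Set.eq_empty_or_nonempty ℐ' with h' | ⟨C, hC⟩
    · -- ℐ = {A}
      have : ℐ = {A} := by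
        ext B; constructor
        · intro hB
          by_contra hBA
          exact Set.eq_empty_iff_forall_notMem.mp h' B ⟨hB, hBA⟩
        · intro hB; rw [Set.mem_singleton_iff] at hB; subst hB; exact hA
      rw [this] at hU
      simp at hU
      exact (hprop A hA).ne hU
    · have hsub' : ℐ' ⊆ κ := fun B hB => hsub hB.1
      have hint' : (⋂₀ ℐ').Nonempty := ⟨x, fun B hB => hx B hB.1⟩
      have hB : ⋃₀ ℐ' ∈ κ := hκ.2 ℐ' hsub' hint'
      have hBsub : ⋃₀ ℐ' ⊆ K := fun y hy => by
        obtain ⟨B, hBℐ, hyB⟩ := hy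
        exact (hprop B hBℐ.1).1 hyB
      by_cases hBK : ⋃₀ ℐ' = K
      · -- induct on smaller family
        have hcard' : ℐ'.ncard ≤ n := by
          have : ℐ'.ncard < ℐ.ncard :=
            Set.ncard_lt_ncard (Set.sdiff_singleton_ssubset.mpr hA) (Set.toFinite ℐ)
          omega
        exact ih ℐ' hcard' hsub' (fun B hB => hprop B hB.1) hint' hBK
      · apply hno
        refine ⟨A, ⋃₀ ℐ', hsub hA, hB, hprop A hA, ⟨hBsub, fun h => hBK (le_antisymm hBsub h)⟩,
          ?_, ⟨x, hx A hA, C, hC, hx C hC.1⟩⟩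
        rw [← hU]
        ext y
        simp only [Set.mem_union, Set.mem_sUnion]
        constructor
        · rintro ⟨B, hBℐ, hy⟩
          by_cases hBA : B = A
          · left; exact hBA ▸ hy
          · right; exact ⟨B, ⟨hBℐ, hBA⟩, hy⟩
        · rintro (hy | ⟨B, hBℐ, hy⟩)
          · exact ⟨A, hA, hy⟩
          · exact ⟨B, hBℐ.1, hy⟩

/-- In a finite connectivity space, a nonempty connected set `K` is irreducible
(not generated by the other connected sets) iff it is not the union of two connected
proper subsets with nonempty intersection. -/
theorem irreducible_iff_no_proper_decomposition
    {X : Type*} [Finite X] (κ : Set (Set X)) (hκ : IsConnectivity κ)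
    (K : Set X) (hK : K ∈ κ) (hne : K.Nonempty) :
    K ∉ generated (κ \ {K}) ↔
      ¬ ∃ A B : Set X, A ∈ κ ∧ B ∈ κ ∧ A ⊂ K ∧ B ⊂ K ∧
        K = A ∪ B ∧ (A ∩ B).Nonempty := by
  constructor
  · intro hirr hdec
    obtain ⟨A, B, hAκ, hBκ, hAK, hBK, hKAB, hABne⟩ := hdec
    apply hirr
    intro κ' hκ'
    obtain ⟨⟨hemp, hun⟩, hsub⟩ := hκ'
    have hA' : A ∈ κ' := hsub ⟨hAκ, hAK.ne⟩
    have hB' : B ∈ κ' := hsub ⟨hBκ, hBK.ne⟩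
    have : ⋃₀ {A, B} ∈ κ' := by
      apply hun
      · intro S hS
        rcases hS with h | h
        · exact h ▸ hA'
        · rw [Set.mem_singleton_iff] at h; exact h ▸ hB'
      · obtain ⟨x, hx⟩ := hABne
        exact ⟨x, by intro S hS; rcases hS with h | h
                     · exact h ▸ hx.1
                     · rw [Set.mem_singleton_iff] at h; exact h ▸ hx.2⟩
    simpa [Set.sUnion_pair, ← hKAB] using this
  · intro hno hgen
    -- κ \ {K} is itself a connectivity structure
    have hconn : IsConnectivity (κ \ {K}) := by
      constructor
      · exact ⟨hκ.1, fun h => hne.ne_empty (Set.mem_singleton_iff.mp h).symm⟩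
      · intro ℐ hsub hint
        have hsub' : ℐ ⊆ κ := fun B hB => (hsub hB).1
        refine ⟨hκ.2 ℐ hsub' hint, ?_⟩
        intro hUK
        rw [Set.mem_singleton_iff] at hUK
        have hprop : ∀ A ∈ ℐ, A ⊂ K := by
          intro A hA
          constructor
          · intro y hy; rw [← hUK]; exact ⟨A, hA, hy⟩
          · intro h
            have : A = K := le_antisymm (by rw [← hUK]; exact fun y hy => ⟨A, hA, hy⟩) h
            exact (hsub hA).2 this
        exact key_no_union hκ hno hne ℐ.ncard ℐ le_rfl hsub' hprop hint hUK
    exact (hgen (κ \ {K}) ⟨hconn, le_rfl⟩).2 rfl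
end

section
/- Let ∼ be the equivalence relation on ℝ defined by x ∼ y ⟺ x − y ∈ ℚ, and let s : ℝ → ℝ/∼ be the canonical surjection. Then the connectivity structure on ℝ/∼ generated by the images of the connected subsets of ℝ, i.e., by {s''K : K ⊆ ℝ preconnected}, consists exactly of ∅, the singletons, and the whole set ℝ/∼ (a Brunnian structure). In particular, for every preconnected K ⊆ ℝ containing at least two points, s''K = ℝ/∼. -/
lemma brunnian_isConnectivity {X : Type*} :
    IsConnectivity {S : Set X | S = ∅ ∨ (∃ x, S = {x}) ∨ S = Set.univ} := by
  constructor
  · exact Or.inl rfl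
  · intro ℐ hℐ hne
    rcases Set.eq_empty_or_nonempty ℐ with rfl | ⟨T, hT⟩
    · left; simp
    obtain ⟨x, hx⟩ := hne
    have hmem : ∀ S ∈ ℐ, S = {x} ∨ S = Set.univ := by
      intro S hS
      have hxS : x ∈ S := hx S hS
      rcases hℐ hS with h | ⟨y, h⟩ | h
      · simp [h] at hxS
      · subst h; simp at hxS; subst hxS; exact Or.inl rfl
      · exact Or.inr h
    by_cases h : ∃ S ∈ ℐ, S = Set.univ
    · right; right
      rcases h with ⟨S, hS, rfl⟩
      exact Set.eq_univ_of_univ_subset (Set.subset_sUnion_of_mem hS)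
    · right; left
      refine ⟨x, Set.Subset.antisymm ?_ ?_⟩
      · rintro y ⟨S, hS, hyS⟩
        rcases hmem S hS with rfl | rfl
        · exact hyS
        · exact absurd ⟨_, hS, rfl⟩ h
      · rintro y rfl
        exact ⟨T, hT, hx T hT⟩

/-- For the equivalence relation `x ∼ y ↔ x - y ∈ ℚ` on `ℝ`, the quotient
connectivity structure on `ℝ/∼` (generated by the images of the preconnected subsets
of `ℝ`) is the Brunnian structure: its members are exactly `∅`, the singletons, and
the whole quotient. In particular every preconnected set with at least two points has
image the whole quotient. -/
theorem quotient_real_by_rat_is_brunnian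
    (r : Setoid ℝ) (hr : ∀ x y : ℝ, r.r x y ↔ ∃ q : ℚ, x - y = (q : ℝ)) :
    generated {S : Set (Quotient r) |
        ∃ K : Set ℝ, IsPreconnected K ∧ S = Quotient.mk r '' K} =
      {S : Set (Quotient r) | S = ∅ ∨ (∃ x, S = {x}) ∨ S = Set.univ} ∧
    ∀ K : Set ℝ, IsPreconnected K → (∃ x ∈ K, ∃ y ∈ K, x ≠ y) →
      Quotient.mk r '' K = Set.univ := by
  have key : ∀ K : Set ℝ, IsPreconnected K → (∃ x ∈ K, ∃ y ∈ K, x ≠ y) →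
      Quotient.mk r '' K = Set.univ := by
    intro K hK ⟨x, hx, y, hy, hxy⟩
    -- wlog x < y
    wlog hlt : x < y generalizing x y
    · exact this y hy x hx hxy.symm (by
        rcases lt_or_gt_of_ne hxy with h | h
        · exact absurd h hlt
        · exact h)
    apply Set.eq_univ_of_forall
    intro z
    induction z using Quotient.inductionOn with
    | h w =>
      obtain ⟨q, hq1, hq2⟩ := exists_rat_btwn (show w - y < w - x by linarith)
      have hu : (w - q : ℝ) ∈ K := by
        have hoc : K.OrdConnected := hK.ordConnected
        exact hoc.out hx hy ⟨by linarith, le_of_lt (by linarith)⟩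
      refine ⟨w - q, hu, ?_⟩
      exact Quotient.sound ((hr _ _).mpr ⟨-q, by push_cast; ring⟩)
  refine ⟨?_, key⟩
  apply Set.Subset.antisymm
  · intro S hS
    exact hS _ ⟨brunnian_isConnectivity, by
      rintro T ⟨K, hK, rfl⟩
      by_cases h2 : ∃ x ∈ K, ∃ y ∈ K, x ≠ y
      · right; right; exact key K hK h2
      · push_neg at h2
        rcases Set.eq_empty_or_nonempty K with rfl | ⟨a, ha⟩
        · left; simp
        · right; left
          refine ⟨Quotient.mk r a, Set.Subset.antisymm ?_ ?_⟩
          · rintro t ⟨b, hb, rfl⟩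
            simp [h2 b hb a ha]
          · rintro t rfl; exact ⟨a, ha, rfl⟩⟩
  · rintro S (rfl | ⟨x, rfl⟩ | rfl) <;> intro κ ⟨hκ, h𝒜⟩
    · exact hκ.1
    · induction x using Quotient.inductionOn with
      | h a => exact h𝒜 ⟨{a}, isPreconnected_singleton, by simp⟩
    · exact h𝒜 ⟨Set.univ, isPreconnected_univ, (key _ isPreconnected_univ
        ⟨0, trivial, 1, trivial, by norm_num⟩).symm⟩
end
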